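/- Let E = {0} ∪ [1/3, 1]. For every x ∈ [0,1] there exists a least integer j ≥ 0 with R^j(x) ∈ E; denoting this least integer by n(x), one has T_EICF(x) = R^{n(x)+1}(x). In other words, the even integer continued fraction map T_EICF is the jump transformation associated to the Romik map R with respect to E. -/

import Mathlib

/-- The Romik map on `[0,1]`. -/
noncomputable def romik (x : ℝ) : ℝ :=
  if x ≤ 1 / 3 then x / (1 - 2 * x)
  else if x ≤ 1 / 2 then 1 / x - 2
  else 2 - 1 / x

/-- The even integer continued fraction map on `[0,1]`: `0 ↦ 0`, and for `k ≥ 1`,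
`x ↦ 1/x - 2k` if `x ∈ [1/(2k+1), 1/(2k)]`, `x ↦ 2k - 1/x` if `x ∈ (1/(2k), 1/(2k-1)]`;
here `k = ⌊(1/x + 1)/2⌋`. -/
noncomputable def eicfT (x : ℝ) : ℝ :=
  if x = 0 then 0
  else if 2 * (⌊(1 / x + 1) / 2⌋ : ℝ) ≤ 1 / x then 1 / x - 2 * (⌊(1 / x + 1) / 2⌋ : ℝ)
  else 2 * (⌊(1 / x + 1) / 2⌋ : ℝ) - 1 / x

/-!
On `[0, 1/3]` the Romik map acts on reciprocals as `y ↦ y - 2`. Starting from `x = 1/y`, it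
therefore subtracts `2` from `y` until `w = y - 2j` lands in `[1, 3]`, i.e. until `R^j x ∈ [1/3, 1]`,
and there `R (1/w) = |w - 2|`. The EICF map sends `1/y` to the distance `|y - 2⌊(y+1)/2⌋|`, which
depends only on `y` modulo `2` and equals `|w - 2|` for `w ∈ [1, 3]`.
-/

open Set

lemma romik_one_div_of_three_le {y : ℝ} (hy : 3 ≤ y) : romik (1 / y) = 1 / (y - 2) := by
  have hy0 : 0 < y := by linarith
  have hle : 1 / y ≤ 1 / 3 := one_div_le_one_div_of_le (by norm_num) hy
  rw [romik, if_pos hle]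
  field_simp

lemma romik_iterate_one_div {y : ℝ} {i : ℕ} (hi : 2 * i + 1 ≤ y) :
    romik^[i] (1 / y) = 1 / (y - 2 * i) := by
  induction i with
  | zero => simp
  | succ i ih =>
    push_cast at hi
    rw [Function.iterate_succ_apply', ih (by linarith), romik_one_div_of_three_le (by linarith)]
    push_cast
    ring_nf

lemma romik_one_div_of_mem_Icc {w : ℝ} (hw : w ∈ Icc (1 : ℝ) 3) : romik (1 / w) = |w - 2| := by
  obtain ⟨hw1, hw3⟩ := hw
  rcases hw3.eq_or_lt with rfl | hw3
  · norm_num [romik]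
  have hw0 : 0 < w := by linarith
  have hthird : ¬ 1 / w ≤ 1 / 3 := not_le.2 (one_div_lt_one_div_of_lt hw0 hw3)
  rw [romik, if_neg hthird, one_div_one_div]
  rcases le_or_gt 2 w with hw2 | hw2
  · rw [if_pos (one_div_le_one_div_of_le (by norm_num) hw2), abs_of_nonneg (by linarith)]
  · rw [if_neg (not_le.2 (one_div_lt_one_div_of_lt hw0 hw2)), abs_of_neg (by linarith)]
    ring

/-- The representative of `y` modulo `2` in `[-1, 1)`. -/
noncomputable def evenRemainder (y : ℝ) : ℝ := y - 2 * ⌊(y + 1) / 2⌋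

lemma eicfT_one_div {y : ℝ} (hy : y ≠ 0) : eicfT (1 / y) = |evenRemainder y| := by
  rw [eicfT, evenRemainder, if_neg (one_div_ne_zero hy), one_div_one_div]
  split_ifs with h
  · rw [abs_of_nonneg (by linarith)]
  · rw [abs_of_neg (by linarith)]
    ring

lemma evenRemainder_sub_two_mul (y : ℝ) (m : ℤ) :
    evenRemainder (y - 2 * m) = evenRemainder y := by
  have : (y - 2 * m + 1) / 2 = (y + 1) / 2 - m := by ring
  rw [evenRemainder, evenRemainder, this, Int.floor_sub_intCast]
  push_cast
  ring

lemma abs_evenRemainder_of_mem_Icc {w : ℝ} (hw : w ∈ Icc (1 : ℝ) 3) :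
    |evenRemainder w| = |w - 2| := by
  obtain ⟨hw1, hw3⟩ := hw
  rcases hw3.eq_or_lt with rfl | hw3
  · norm_num [evenRemainder]
  · have : ⌊(w + 1) / 2⌋ = 1 := by
      rw [Int.floor_eq_iff]; constructor <;> push_cast <;> linarith
    rw [evenRemainder, this]
    push_cast
    ring_nf

lemma exists_nat_sub_two_mul_mem_Icc {y : ℝ} (hy : 1 ≤ y) :
    ∃ j : ℕ, y - 2 * j ∈ Icc (1 : ℝ) 3 ∧ ∀ i < j, 3 < y - 2 * i := by
  refine ⟨⌈(y - 3) / 2⌉₊, ⟨?_, ?_⟩, fun i hi => ?_⟩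
  · rcases le_or_gt y 3 with hy3 | hy3
    · rw [Nat.ceil_eq_zero.2 (by linarith)]
      simpa using hy
    · have := Nat.ceil_lt_add_one (show 0 ≤ (y - 3) / 2 by linarith)
      linarith
  · linarith [Nat.le_ceil ((y - 3) / 2)]
  · linarith [Nat.lt_ceil.1 hi]

/-- The even integer continued fraction map is the jump transformation associated to the
Romik map with respect to `E = {0} ∪ [1/3, 1]`: for every `x ∈ [0,1]` there is a least
`j ≥ 0` with `R^j(x) ∈ E`, and `T_EICF(x) = R^(j+1)(x)`. -/
theorem eicfT_jump_transformation_of_romik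
    (x : ℝ) (hx : x ∈ Set.Icc (0 : ℝ) 1) :
    ∃ j : ℕ, romik^[j] x ∈ ({0} : Set ℝ) ∪ Set.Icc (1 / 3 : ℝ) 1 ∧
      (∀ i < j, romik^[i] x ∉ ({0} : Set ℝ) ∪ Set.Icc (1 / 3 : ℝ) 1) ∧
      eicfT x = romik^[j + 1] x := by
  obtain ⟨hx0, hx1⟩ := hx
  rcases hx0.eq_or_lt with rfl | hx0
  · exact ⟨0, by simp, by simp, by norm_num [eicfT, romik]⟩
  obtain ⟨y, hy, rfl⟩ : ∃ y : ℝ, 1 ≤ y ∧ x = 1 / y :=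
    ⟨1 / x, one_le_one_div hx0 hx1, (one_div_one_div x).symm⟩
  obtain ⟨j, hj, hlt⟩ := exists_nat_sub_two_mul_mem_Icc hy
  have hiter : ∀ i ≤ j, romik^[i] (1 / y) = 1 / (y - 2 * i) := fun i hi =>
    romik_iterate_one_div (by linarith [hj.1, (Nat.cast_le (α := ℝ)).2 hi])
  refine ⟨j, Or.inr ?_, fun i hi hE => ?_, ?_⟩
  · rw [hiter j le_rfl]
    exact ⟨one_div_le_one_div_of_le (by linarith [hj.1]) hj.2, by
      rw [div_le_one (by linarith [hj.1])]; exact hj.1⟩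
  · rw [hiter i hi.le] at hE
    have h3 := hlt i hi
    rcases hE with hE | hE
    · exact one_div_ne_zero (by linarith) hE
    · exact hE.1.not_gt (one_div_lt_one_div_of_lt (by norm_num) h3)
  · calc eicfT (1 / y) = |evenRemainder y| := eicfT_one_div (by linarith)
      _ = |evenRemainder (y - 2 * j)| := by
        rw [← evenRemainder_sub_two_mul y j, Int.cast_natCast]
      _ = |y - 2 * j - 2| := abs_evenRemainder_of_mem_Icc hj
      _ = romik^[j + 1] (1 / y) := by
        rw [Function.iterate_succ_apply', hiter j le_rfl, romik_one_div_of_mem_Icc hj]
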